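/- arXiv:1703.01479 — 2 statements merged into one kernel-verified Lean document; each statement's English description precedes it below -/
import Mathlib

section
/- Let X be a centered real Gaussian random variable with variance σ² > 0, and let a > 0 and s ∈ [0, a]. Then P(X + s ∈ [0, a]) ≥ P(X ∈ [0, a]). -/
open MeasureTheory ProbabilityTheory

lemma gaussianPDFReal_anti (v : NNReal) {x y : ℝ} (hx : 0 ≤ x) (hxy : x ≤ y) :
    gaussianPDFReal 0 v y ≤ gaussianPDFReal 0 v x := by
  rcases eq_or_ne v 0 with h | h
  · simp [h]
  have hv : (0:ℝ) < v := by positivity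
  unfold gaussianPDFReal
  simp only [sub_zero]
  refine mul_le_mul_of_nonneg_left ?_ (by positivity)
  refine Real.exp_le_exp.2 ?_
  have h2v : (0:ℝ) < 2 * v := by positivity
  exact div_le_div_of_nonneg_right (by nlinarith) h2v.le

/-- For a centered Gaussian `X` with variance `σ² > 0`, `a > 0` and a shift
`s ∈ [0, a]`, we have `P(X + s ∈ [0, a]) ≥ P(X ∈ [0, a])`. -/
theorem gaussian_shift_into_interval (σ2 : NNReal) (hσ2 : 0 < σ2) (a s : ℝ)
    (ha : 0 < a) (hs : s ∈ Set.Icc 0 a) :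
    gaussianReal 0 σ2 {x : ℝ | x + s ∈ Set.Icc 0 a} ≥
      gaussianReal 0 σ2 (Set.Icc 0 a) := by
  have hv : σ2 ≠ 0 := hσ2.ne'
  obtain ⟨hs0, hsa⟩ := hs
  set μ := gaussianReal 0 σ2 with hμ
  have hset : {x : ℝ | x + s ∈ Set.Icc 0 a} = Set.Icc (-s) (a - s) := by
    ext x
    simp only [Set.mem_setOf_eq, Set.mem_Icc]
    constructor <;> rintro ⟨h1, h2⟩ <;> constructor <;> linarith
  rw [hset]
  have hsing : ∀ x : ℝ, μ {x} = 0 := fun x =>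
    gaussianReal_absolutelyContinuous 0 hv (measure_singleton x)
  have hmono : ∀ (S T : Set ℝ) (p : ℝ), S ⊆ insert p T → μ S ≤ μ T := by
    intro S T p h
    calc μ S ≤ μ (insert p T) := measure_mono h
      _ ≤ μ {p} + μ T := by rw [Set.insert_eq]; exact measure_union_le _ _
      _ = μ T := by rw [hsing]; simp
  have hIccIoc : ∀ c d : ℝ, μ (Set.Icc c d) = μ (Set.Ioc c d) := by
    intro c d
    refine le_antisymm (hmono _ _ c ?_) (measure_mono Set.Ioc_subset_Icc_self)
    rintro x ⟨h1, h2⟩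
    rcases h1.eq_or_lt with h | h
    · exact Or.inl h.symm
    · exact Or.inr ⟨h, h2⟩
  rw [hIccIoc, hIccIoc,
    ← Set.Ioc_union_Ioc_eq_Ioc (neg_nonpos.2 hs0) (by linarith : (0:ℝ) ≤ a - s),
    ← Set.Ioc_union_Ioc_eq_Ioc (by linarith : (0:ℝ) ≤ a - s) (by linarith : a - s ≤ a),
    measure_union (Set.Ioc_disjoint_Ioc_of_le le_rfl) measurableSet_Ioc,
    measure_union (Set.Ioc_disjoint_Ioc_of_le le_rfl) measurableSet_Ioc]
  suffices h : μ (Set.Ioc (a - s) a) ≤ μ (Set.Ioc (-s) 0) by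
    rw [ge_iff_le, add_comm (μ (Set.Ioc (-s) 0))]
    exact add_le_add le_rfl h
  -- symmetry: μ (Ioc (-s) 0) = μ (Ico 0 s)
  have hmapneg : μ.map (fun x : ℝ => (-1 : ℝ) * x) = μ := by
    rw [hμ, gaussianReal_map_const_mul]
    norm_num
  have hsym : μ (Set.Ioc (-s) 0) = μ (Set.Ico 0 s) := by
    conv_lhs => rw [← hmapneg]
    rw [Measure.map_apply (by fun_prop) measurableSet_Ioc]
    congr 1
    ext x
    simp only [Set.mem_preimage, Set.mem_Ioc, Set.mem_Ico, neg_one_mul]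
    constructor <;> rintro ⟨h1, h2⟩ <;> constructor <;> linarith
  rw [hsym]
  -- main comparison: μ (Ioc (a-s) a) ≤ μ (Ioc 0 s) ≤ μ (Ico 0 s)
  have hstep : μ (Set.Ioc 0 s) ≤ μ (Set.Ico 0 s) := by
    refine hmono _ _ s ?_
    rintro x ⟨h1, h2⟩
    rcases h2.eq_or_lt with h | h
    · exact Or.inl h
    · exact Or.inr ⟨le_of_lt h1, h⟩
  refine le_trans ?_ hstep
  rw [hμ, gaussianReal_apply 0 hv, gaussianReal_apply 0 hv]
  have htrans : ∫⁻ x in Set.Ioc (a - s) a, gaussianPDF 0 σ2 x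
      = ∫⁻ x in Set.Ioc 0 s, gaussianPDF 0 σ2 (x + (a - s)) := by
    conv_lhs => rw [← map_add_right_eq_self volume (a - s)]
    rw [setLIntegral_map measurableSet_Ioc (measurable_gaussianPDF _ _)
      (measurable_add_const _)]
    have hpre : (fun x : ℝ => x + (a - s)) ⁻¹' Set.Ioc (a - s) a = Set.Ioc 0 s := by
      ext x
      simp only [Set.mem_preimage, Set.mem_Ioc]
      constructor <;> rintro ⟨h1, h2⟩ <;> constructor <;> linarith
    rw [hpre]
  rw [htrans]
  refine setLIntegral_mono (measurable_gaussianPDF _ _) ?_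
  intro x hx
  refine ENNReal.ofReal_le_ofReal ?_
  exact gaussianPDFReal_anti σ2 hx.1.le (by linarith)
end

section
/- Let φ be the discrete Gaussian free field on Λ_N with zero boundary conditions, A ⊆ Λ_N, and a > 0. Then P_N(φ(x) ≥ 0 for all x ∈ Λ_N \ A | φ(y) ∈ [0,a] for all y ∈ A) ≥ P_{Λ_N \ A}(φ(x) ≥ 0 for all x ∈ Λ_N \ A), where P_{Λ_N \ A} is the law of the zero-boundary GFF on Λ_N \ A. -/
open MeasureTheory Real Finset

noncomputable section

/-- The nearest neighbours of a point of `ℤ^d`. -/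
def nbrs (d : ℕ) (x : Fin d → ℤ) : Finset (Fin d → ℤ) :=
  (Finset.univ : Finset (Fin d × Bool)).image
    (fun p => Function.update x p.1 (x p.1 + if p.2 then 1 else -1))

/-- Outer boundary of a finite subset of `ℤ^d`. -/
def bdry (d : ℕ) (A : Finset (Fin d → ℤ)) : Finset (Fin d → ℤ) :=
  A.biUnion (nbrs d) \ A

/-- The Gaussian free field Hamiltonian
`H_A(φ) = (1/8d) ∑_{x,y ∈ A ∪ ∂A, |x-y| = 1} (φ x - φ y)²`. -/
def ham (d : ℕ) (A : Finset (Fin d → ℤ)) (φ : (Fin d → ℤ) → ℝ) : ℝ :=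
  (1 / (8 * d)) * ∑ x ∈ A ∪ bdry d A, ∑ y ∈ A ∪ bdry d A,
    if y ∈ nbrs d x then (φ x - φ y) ^ 2 else 0

/-- Extension of a field on `A` by zero boundary conditions. -/
def extz {d : ℕ} (A : Finset (Fin d → ℤ)) (ψ : A → ℝ) : (Fin d → ℤ) → ℝ :=
  fun x => if h : x ∈ A then ψ ⟨x, h⟩ else 0

/-- Unnormalized density of the zero-boundary GFF on `A`. -/
def gffDensity (d : ℕ) (A : Finset (Fin d → ℤ)) (ψ : A → ℝ) : ℝ :=
  Real.exp (-ham d A (extz A ψ))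

/-- Partition function of the zero-boundary GFF on `A`. -/
def gffZ (d : ℕ) (A : Finset (Fin d → ℤ)) : ℝ :=
  ∫ ψ : A → ℝ, gffDensity d A ψ

/-- The zero-boundary Gaussian free field measure on `A ⊂ ℤ^d`. -/
def gff (d : ℕ) (A : Finset (Fin d → ℤ)) : Measure (A → ℝ) :=
  (ENNReal.ofReal (gffZ d A))⁻¹ •
    volume.withDensity (fun ψ => ENNReal.ofReal (gffDensity d A ψ))

/-- The box `Λ_N = {-⌊N/2⌋, …, ⌊N/2⌋}^d`. -/
def box (d N : ℕ) : Finset (Fin d → ℤ) :=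
  Fintype.piFinset (fun _ => Finset.Icc (-(N / 2 : ℤ)) (N / 2 : ℤ))

/-- Unnormalized density of the square-well pinned field on `Λ_N`. -/
def pinDensity (d N : ℕ) (a b : ℝ) (ψ : box d N → ℝ) : ℝ :=
  Real.exp (-ham d (box d N) (extz (box d N) ψ) +
    b * ∑ x : box d N, (if ψ x ∈ Set.Icc 0 a then (1 : ℝ) else 0))

/-- Partition function of the pinned field. -/
def pinZ (d N : ℕ) (a b : ℝ) : ℝ := ∫ ψ : box d N → ℝ, pinDensity d N a b ψ

/-- The square-well pinning measure `P̃_{N,a,b}` on the box `Λ_N`. -/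
def pin (d N : ℕ) (a b : ℝ) : Measure (box d N → ℝ) :=
  (ENNReal.ofReal (pinZ d N a b))⁻¹ •
    volume.withDensity (fun ψ => ENNReal.ofReal (pinDensity d N a b ψ))

/-- The number of pinned points `ξ̃_N`. -/
def numPinned (d N : ℕ) (a : ℝ) (ψ : box d N → ℝ) : ℕ :=
  (Finset.univ.filter (fun x : box d N => ψ x ∈ Set.Icc 0 a)).card

/-- The hard wall event `Ω⁺_B` within the box, for fields on `Λ_N`: nonnegativity
at every point of `B`. -/
def wallOn (d N : ℕ) (B : Finset (Fin d → ℤ)) : Set (box d N → ℝ) :=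
  {ψ | ∀ x : box d N, (x : Fin d → ℤ) ∈ B → 0 ≤ ψ x}

/-- The hard-wall event for the zero-boundary GFF on `A`. -/
def wall {d : ℕ} (A : Finset (Fin d → ℤ)) : Set (A → ℝ) := {ψ | ∀ x, 0 ≤ ψ x}

end

/-!
Write `B = Λ \ A`. For fixed values `χ ≥ 0` on `A`, the energy of the glued field splits as
`ham Λ (φ ⊕ χ) = ham B (φ - h) + c`, where `h` is the harmonic extension of `χ` into `B`
(Markov property). So conditionally on `χ` the field on `B` is the zero-boundary GFF on `B`
shifted by `h`, and `h ≥ 0` by the maximum principle, which in variational form says that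
truncating `h` at `0` does not increase the energy. Shifting by a nonnegative function only
enlarges the hard-wall event; integrating over `χ ∈ [0, a]^A` gives the theorem.
-/

open MeasureTheory Finset

variable {d : ℕ}

lemma mem_nbrs_iff {x y : Fin d → ℤ} :
    y ∈ nbrs d x ↔
      ∃ (i : Fin d) (b : Bool), Function.update x i (x i + if b then 1 else -1) = y := by
  simp only [nbrs, mem_image, mem_univ, true_and, Prod.exists]

lemma mem_nbrs_comm {x y : Fin d → ℤ} (h : y ∈ nbrs d x) : x ∈ nbrs d y := by
  obtain ⟨i, b, rfl⟩ := mem_nbrs_iff.1 h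
  refine mem_nbrs_iff.2 ⟨i, !b, funext fun j => ?_⟩
  rcases eq_or_ne j i with rfl | hj
  · cases b <;> simp
  · simp [Function.update_of_ne hj]

lemma mem_union_bdry_of_mem_nbrs {S : Finset (Fin d → ℤ)} {x y : Fin d → ℤ} (hx : x ∈ S)
    (hy : y ∈ nbrs d x) : y ∈ S ∪ bdry d S := by
  by_cases h : y ∈ S
  · exact mem_union_left _ h
  · exact mem_union_right _ (mem_sdiff.2 ⟨mem_biUnion.2 ⟨x, hx, hy⟩, h⟩)

lemma ham_nonneg (S : Finset (Fin d → ℤ)) (f : (Fin d → ℤ) → ℝ) : 0 ≤ ham d S f := by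
  unfold ham; positivity

lemma ham_smul (S : Finset (Fin d → ℤ)) (t : ℝ) (f : (Fin d → ℤ) → ℝ) :
    ham d S (t • f) = t ^ 2 * ham d S f := by
  simp only [ham, Pi.smul_apply, smul_eq_mul, ← mul_sub, mul_pow, mul_sum, mul_ite, mul_zero]
  ring_nf

lemma ham_comp_le {g : ℝ → ℝ} (hg : LipschitzWith 1 g) (S : Finset (Fin d → ℤ))
    (f : (Fin d → ℤ) → ℝ) : ham d S (g ∘ f) ≤ ham d S f := by
  unfold ham
  gcongr with x _ y _
  split_ifs
  · simpa [Real.dist_eq, sq_abs] using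
      pow_le_pow_left₀ dist_nonneg (hg.dist_le_mul (f x) (f y)) 2
  · rfl

lemma ham_of_support_subset {B S : Finset (Fin d → ℤ)} (hBS : B ⊆ S) {f : (Fin d → ℤ) → ℝ}
    (hf : ∀ z ∉ B, f z = 0) : ham d S f = ham d B f := by
  have hsub : B ∪ bdry d B ⊆ S ∪ bdry d S := by
    intro z hz
    rcases mem_union.1 hz with hz | hz
    · exact mem_union_left _ (hBS hz)
    · obtain ⟨x, hx, hzx⟩ := mem_biUnion.1 (mem_sdiff.1 hz).1
      exact mem_union_bdry_of_mem_nbrs (hBS hx) hzx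
  -- an edge with an endpoint outside `B ∪ ∂B` has both endpoints outside `B`
  have hvanish : ∀ p ∈ (S ∪ bdry d S) ×ˢ (S ∪ bdry d S), p ∉ (B ∪ bdry d B) ×ˢ (B ∪ bdry d B) →
      (if p.2 ∈ nbrs d p.1 then (f p.1 - f p.2) ^ 2 else 0) = 0 := by
    rintro ⟨x, y⟩ - hp
    split_ifs with hxy
    · have hout : x ∉ B ∧ y ∉ B := by
        simp only [mem_product, not_and_or] at hp
        rcases hp with hx | hy
        · exact ⟨fun h => hx (mem_union_left _ h),
            fun h => hx (mem_union_bdry_of_mem_nbrs h (mem_nbrs_comm hxy))⟩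
        · exact ⟨fun h => hy (mem_union_bdry_of_mem_nbrs h hxy), fun h => hy (mem_union_left _ h)⟩
      simp [hf _ hout.1, hf _ hout.2]
    · rfl
  simp only [ham, ← sum_product']
  rw [sum_subset (product_subset_product hsub hsub) hvanish]

lemma eq_of_mem_nbrs_of_ham_eq_zero (hd : 0 < d) {S : Finset (Fin d → ℤ)}
    {f : (Fin d → ℤ) → ℝ} (h : ham d S f = 0) {x y : Fin d → ℤ} (hx : x ∈ S)
    (hy : y ∈ nbrs d x) : f x = f y := by
  have hterm_nonneg : ∀ x ∈ S ∪ bdry d S, ∀ y ∈ S ∪ bdry d S,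
      0 ≤ if y ∈ nbrs d x then (f x - f y) ^ 2 else 0 := fun _ _ _ _ => by positivity
  have hsum : ∑ x ∈ S ∪ bdry d S, ∑ y ∈ S ∪ bdry d S,
      (if y ∈ nbrs d x then (f x - f y) ^ 2 else 0) = 0 := by
    simpa [ham, hd.ne'] using h
  have hxy := (sum_eq_zero_iff_of_nonneg fun y hy => hterm_nonneg x (mem_union_left _ hx) y hy).1
    ((sum_eq_zero_iff_of_nonneg fun x hx => sum_nonneg (hterm_nonneg x hx)).1 hsum x
      (mem_union_left _ hx)) y (mem_union_bdry_of_mem_nbrs hx hy)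
  rw [if_pos hy, sq_eq_zero_iff, sub_eq_zero] at hxy
  exact hxy

/-- Walk from `z` in the first coordinate direction until leaving `S`. -/
lemma eq_zero_of_forall_mem_nbrs_eq (hd : 0 < d) {S : Finset (Fin d → ℤ)}
    {f : (Fin d → ℤ) → ℝ} (hf : ∀ z ∉ S, f z = 0) (h : ∀ x ∈ S, ∀ y ∈ nbrs d x, f x = f y)
    (z : Fin d → ℤ) : f z = 0 := by
  let i : Fin d := ⟨0, hd⟩
  obtain ⟨M, hM⟩ : ∃ M : ℤ, ∀ x ∈ S, x i ≤ M :=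
    ⟨∑ x ∈ S, |x i|, fun x hx => (le_abs_self _).trans
      (single_le_sum (f := fun x => |x i|) (fun _ _ => abs_nonneg _) hx)⟩
  suffices ∀ n : ℕ, ∀ z : Fin d → ℤ, M - z i < n → f z = 0 from
    this (M - z i).toNat.succ z (by omega)
  intro n
  induction n with
  | zero => exact fun z hz => hf z fun hzS => by have := hM z hzS; omega
  | succ n ih =>
    intro z hz
    by_cases hzS : z ∈ S
    · have hnbr : Function.update z i (z i + 1) ∈ nbrs d z := mem_nbrs_iff.2 ⟨i, true, rfl⟩
      rw [h z hzS _ hnbr]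
      exact ih _ (by simp; omega)
    · exact hf z hzS

lemma extz_apply_of_mem {S : Finset (Fin d → ℤ)} (φ : S → ℝ) {z : Fin d → ℤ} (hz : z ∈ S) :
    extz S φ z = φ ⟨z, hz⟩ := dif_pos hz

lemma extz_apply_of_notMem {S : Finset (Fin d → ℤ)} (φ : S → ℝ) {z : Fin d → ℤ} (hz : z ∉ S) :
    extz S φ z = 0 := dif_neg hz

lemma extz_nonneg {S : Finset (Fin d → ℤ)} {φ : S → ℝ} (hφ : 0 ≤ φ) : 0 ≤ extz S φ := by
  intro z
  unfold extz
  split_ifs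
  exacts [hφ _, le_rfl]

lemma eq_zero_of_ham_extz_eq_zero (hd : 0 < d) {S : Finset (Fin d → ℤ)} {φ : S → ℝ}
    (h : ham d S (extz S φ) = 0) : φ = 0 := by
  funext x
  simpa [extz_apply_of_mem φ x.2] using eq_zero_of_forall_mem_nbrs_eq hd
    (fun z hz => extz_apply_of_notMem φ hz)
    (fun x hx y hy => eq_of_mem_nbrs_of_ham_eq_zero hd h hx hy) x

def extzₗ (S : Finset (Fin d → ℤ)) : (S → ℝ) →ₗ[ℝ] (Fin d → ℤ) → ℝ where
  toFun := extz S
  map_add' φ ψ := funext fun z => by by_cases h : z ∈ S <;> simp [extz, h]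
  map_smul' t φ := funext fun z => by by_cases h : z ∈ S <;> simp [extz, h]

@[simp] lemma extzₗ_apply (S : Finset (Fin d → ℤ)) (φ : S → ℝ) : extzₗ S φ = extz S φ := rfl

lemma continuous_ham (S : Finset (Fin d → ℤ)) : Continuous (ham d S) := by
  refine continuous_const.mul <| continuous_finsetSum _ fun x _ =>
    continuous_finsetSum _ fun y _ => ?_
  split_ifs <;> fun_prop

lemma continuous_extz (S : Finset (Fin d → ℤ)) : Continuous (extz S) :=
  continuous_pi fun z => by unfold extz; split_ifs <;> fun_prop

def energyForm (d : ℕ) (S : Finset (Fin d → ℤ)) : LinearMap.BilinForm ℝ ((Fin d → ℤ) → ℝ) :=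
  ∑ x ∈ S ∪ bdry d S, ∑ y ∈ S ∪ bdry d S, if y ∈ nbrs d x then
    let grad : ((Fin d → ℤ) → ℝ) →ₗ[ℝ] ℝ :=
      LinearMap.proj (R := ℝ) (φ := fun _ => ℝ) x - LinearMap.proj y
    LinearMap.BilinForm.linMulLin grad grad
  else 0

lemma energyForm_apply (S : Finset (Fin d → ℤ)) (f g : (Fin d → ℤ) → ℝ) :
    energyForm d S f g = ∑ x ∈ S ∪ bdry d S, ∑ y ∈ S ∪ bdry d S,
      if y ∈ nbrs d x then (f x - f y) * (g x - g y) else 0 := by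
  simp only [energyForm, LinearMap.BilinForm.sum_apply]
  refine sum_congr rfl fun x _ => sum_congr rfl fun y _ => ?_
  split_ifs <;> simp [LinearMap.BilinForm.linMulLin_apply]

lemma energyForm_comm (S : Finset (Fin d → ℤ)) (f g : (Fin d → ℤ) → ℝ) :
    energyForm d S f g = energyForm d S g f := by
  simp only [energyForm_apply, mul_comm]

lemma ham_eq_energyForm (S : Finset (Fin d → ℤ)) (f : (Fin d → ℤ) → ℝ) :
    ham d S f = 1 / (8 * d) * energyForm d S f f := by
  simp only [ham, energyForm_apply, sq]

lemma ham_add_of_energyForm_eq_zero {S : Finset (Fin d → ℤ)} {f g : (Fin d → ℤ) → ℝ}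
    (h : energyForm d S f g = 0) : ham d S (f + g) = ham d S f + ham d S g := by
  simp only [ham_eq_energyForm, map_add, LinearMap.add_apply, h, energyForm_comm S g f]
  ring

/-- Markov property: `h` is the harmonic extension of `v` into `B`, obtained by Riesz
representation for the positive definite form `energyForm d Λ` on fields supported in `B`. -/
lemma exists_ham_split (hd : 0 < d) {B Λ : Finset (Fin d → ℤ)} (hBΛ : B ⊆ Λ)
    (v : (Fin d → ℤ) → ℝ) :
    ∃ h : B → ℝ, ∀ φ : B → ℝ,
      ham d Λ (extz B φ + v) = ham d B (extz B (φ - h)) + ham d Λ (extz B h + v) := by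
  have hham : ∀ φ : B → ℝ, ham d Λ (extz B φ) = ham d B (extz B φ) := fun φ =>
    ham_of_support_subset hBΛ fun _ hz => extz_apply_of_notMem φ hz
  set bil : LinearMap.BilinForm ℝ (B → ℝ) := (energyForm d Λ).compl₁₂ (extzₗ B) (extzₗ B)
  have hnd : bil.Nondegenerate := by
    have hsep : ∀ φ, (∀ ψ, bil φ ψ = 0) → φ = 0 := fun φ hφ => by
      refine eq_zero_of_ham_extz_eq_zero hd ?_
      rw [← hham, ham_eq_energyForm]
      simpa [bil] using Or.inr (hφ φ)
    exact ⟨hsep, fun φ hφ => hsep φ fun ψ => by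
      simpa [bil, energyForm_comm] using hφ ψ⟩
  set ℓ : Module.Dual ℝ (B → ℝ) := (energyForm d Λ).flip v ∘ₗ extzₗ B
  set h := (LinearMap.BilinForm.toDual bil hnd).symm (-ℓ)
  refine ⟨h, fun φ => ?_⟩
  have horth : energyForm d Λ (extz B (φ - h)) (extz B h + v) = 0 := by
    have hh := LinearMap.BilinForm.apply_toDual_symm_apply (B := bil) (hB := hnd) (-ℓ) (φ - h)
    simp only [bil, ℓ, LinearMap.compl₁₂_apply, extzₗ_apply, LinearMap.neg_apply,
      LinearMap.comp_apply] at hh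
    rw [map_add, energyForm_comm, hh, LinearMap.BilinForm.flip_apply, neg_add_cancel]
  rw [← hham, ← ham_add_of_energyForm_eq_zero horth, ← extzₗ_apply, ← extzₗ_apply,
    ← extzₗ_apply, ← add_assoc, ← map_add, sub_add_cancel]

/-- Maximum principle: truncating `h` at `0` does not increase the energy, and `h` is the unique
minimiser of the energy. -/
lemma nonneg_of_ham_split (hd : 0 < d) {B Λ : Finset (Fin d → ℤ)} {v : (Fin d → ℤ) → ℝ}
    (hv : 0 ≤ v) (hvB : ∀ z ∈ B, v z = 0) {h : B → ℝ}
    (hsplit : ∀ φ : B → ℝ,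
      ham d Λ (extz B φ + v) = ham d B (extz B (φ - h)) + ham d Λ (extz B h + v)) :
    0 ≤ h := by
  have htrunc : extz B (h ⊔ 0) + v = (fun t => max t 0) ∘ (extz B h + v) := by
    funext z
    by_cases hz : z ∈ B
    · simp [extz_apply_of_mem _ hz, hvB z hz]
    · simpa [extz_apply_of_notMem _ hz] using hv z
  have hlip : LipschitzWith 1 fun t : ℝ => max t 0 := LipschitzWith.id.max_const 0
  have hle := ham_comp_le hlip Λ (extz B h + v)
  rw [← htrunc, hsplit] at hle
  have hzero := eq_zero_of_ham_extz_eq_zero hd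
    (le_antisymm (by linarith) (ham_nonneg B (extz B (h ⊔ 0 - h))))
  rw [sub_eq_zero, sup_eq_left] at hzero
  exact hzero

/-- Compare with the minimum of `Q` on the unit sphere. -/
lemma exists_pos_mul_norm_sq_le {V : Type*} [NormedAddCommGroup V] [NormedSpace ℝ V]
    [ProperSpace V] {Q : V → ℝ} (hQ : Continuous Q) (hsmul : ∀ (t : ℝ) x, Q (t • x) = t ^ 2 * Q x)
    (hpos : ∀ x ≠ 0, 0 < Q x) : ∃ ε > 0, ∀ x, ε * ‖x‖ ^ 2 ≤ Q x := by
  have hQ0 : Q 0 = 0 := by simpa using hsmul 0 0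
  cases subsingleton_or_nontrivial V
  · exact ⟨1, one_pos, fun x => by simp [Subsingleton.elim x 0, hQ0]⟩
  obtain ⟨u, hu, hmin⟩ := (isCompact_sphere (0 : V) 1).exists_isMinOn
    (NormedSpace.sphere_nonempty.2 zero_le_one) hQ.continuousOn
  have hu0 : u ≠ 0 := ne_zero_of_mem_unit_sphere ⟨u, hu⟩
  refine ⟨Q u, hpos u hu0, fun x => ?_⟩
  rcases eq_or_ne x 0 with rfl | hx
  · simp [hQ0]
  have hxn : 0 < ‖x‖ := norm_pos_iff.2 hx
  have hsphere : ‖x‖⁻¹ • x ∈ Metric.sphere (0 : V) 1 := by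
    simp [norm_smul, hxn.ne']
  have := isMinOn_iff.1 hmin _ hsphere
  rw [hsmul, inv_pow] at this
  rwa [le_inv_mul_iff₀ (by positivity), mul_comm] at this

lemma continuous_ham_extz (S T : Finset (Fin d → ℤ)) :
    Continuous fun ψ : T → ℝ => ham d S (extz T ψ) :=
  (continuous_ham S).comp (continuous_extz T)

lemma gffDensity_pos (S : Finset (Fin d → ℤ)) (ψ : S → ℝ) : 0 < gffDensity d S ψ :=
  Real.exp_pos _

lemma measurable_gffDensity (S : Finset (Fin d → ℤ)) : Measurable (gffDensity d S) :=
  (Real.continuous_exp.comp (continuous_ham_extz S S).neg).measurable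

/-- The Gaussian density is dominated by a product of one-dimensional Gaussians. -/
lemma integrable_gffDensity (hd : 0 < d) (S : Finset (Fin d → ℤ)) :
    Integrable (gffDensity d S) := by
  obtain ⟨ε, hε, hQ⟩ := exists_pos_mul_norm_sq_le (continuous_ham_extz S S)
    (fun t ψ => by rw [← extzₗ_apply, map_smul, extzₗ_apply, ham_smul])
    (fun ψ hψ => (ham_nonneg S _).lt_of_ne fun h => hψ (eq_zero_of_ham_extz_eq_zero hd h.symm))
  set n : ℝ := Fintype.card S + 1
  have hn : 0 < n := by positivity
  refine Integrable.mono' (g := fun ψ : S → ℝ => ∏ i, Real.exp (-(ε / n) * ψ i ^ 2))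
    (Integrable.fintype_prod (f := fun _ v => Real.exp (-(ε / n) * v ^ 2))
      fun _ => integrable_exp_neg_mul_sq (by positivity))
    (measurable_gffDensity S).aestronglyMeasurable (Filter.Eventually.of_forall fun ψ => ?_)
  have hsum : ∑ i, ψ i ^ 2 ≤ n * ‖ψ‖ ^ 2 := calc
    ∑ i, ψ i ^ 2 ≤ ∑ _i : S, ‖ψ‖ ^ 2 := sum_le_sum fun i _ => by
      simpa [sq_abs] using pow_le_pow_left₀ (abs_nonneg _) (norm_le_pi_norm ψ i) 2
    _ ≤ n * ‖ψ‖ ^ 2 := by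
      rw [sum_const, nsmul_eq_mul, card_univ]
      gcongr
      simp [n]
  rw [Real.norm_eq_abs, abs_of_pos (gffDensity_pos S ψ), gffDensity, ← Real.exp_sum,
    Real.exp_le_exp, ← mul_sum]
  have := hQ ψ
  have : ε / n * ∑ i, ψ i ^ 2 ≤ ε * ‖ψ‖ ^ 2 := by
    rw [div_mul_eq_mul_div, div_le_iff₀ hn]
    nlinarith
  linarith

lemma lintegral_gffDensity (hd : 0 < d) (S : Finset (Fin d → ℤ)) :
    ∫⁻ ψ, ENNReal.ofReal (gffDensity d S ψ) = ENNReal.ofReal (gffZ d S) :=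
  (ofReal_integral_eq_lintegral_ofReal (integrable_gffDensity hd S)
    (Filter.Eventually.of_forall fun ψ => (gffDensity_pos S ψ).le)).symm

lemma setLIntegral_gffDensity_ne_zero (S : Finset (Fin d → ℤ)) {E : Set (S → ℝ)}
    (hE : volume E ≠ 0) : ∫⁻ ψ in E, ENNReal.ofReal (gffDensity d S ψ) ≠ 0 := by
  refine ((setLIntegral_pos_iff (measurable_gffDensity S).ennreal_ofReal).2 ?_).ne'
  rw [Function.support_eq_univ fun ψ => (ENNReal.ofReal_pos.2 (gffDensity_pos S ψ)).ne',
    Set.univ_inter]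
  exact pos_iff_ne_zero.2 hE

lemma gffZ_pos (hd : 0 < d) (S : Finset (Fin d → ℤ)) : 0 < gffZ d S := by
  rw [← ENNReal.ofReal_pos, ← lintegral_gffDensity hd, ← setLIntegral_univ]
  exact pos_iff_ne_zero.2
    (setLIntegral_gffDensity_ne_zero S (Measure.measure_univ_ne_zero.2 (NeZero.ne _)))

lemma gff_apply (S : Finset (Fin d → ℤ)) (E : Set (S → ℝ)) :
    gff d S E = (ENNReal.ofReal (gffZ d S))⁻¹ * ∫⁻ ψ in E, ENNReal.ofReal (gffDensity d S ψ) := by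
  rw [gff, Measure.smul_apply, withDensity_apply' _ E, smul_eq_mul]

lemma gff_ne_zero (S : Finset (Fin d → ℤ)) {E : Set (S → ℝ)} (hE : volume E ≠ 0) :
    gff d S E ≠ 0 := by
  rw [gff_apply]
  exact mul_ne_zero (ENNReal.inv_ne_zero.2 ENNReal.ofReal_ne_top)
    (setLIntegral_gffDensity_ne_zero S hE)

lemma gff_ne_top (hd : 0 < d) (S : Finset (Fin d → ℤ)) (E : Set (S → ℝ)) : gff d S E ≠ ⊤ := by
  rw [gff_apply]
  refine ENNReal.mul_ne_top (ENNReal.inv_ne_top.2 (ENNReal.ofReal_pos.2 (gffZ_pos hd S)).ne') ?_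
  exact ne_top_of_le_ne_top (lintegral_gffDensity hd S ▸ ENNReal.ofReal_ne_top)
    (setLIntegral_le_lintegral E _)

lemma setLIntegral_le_setLIntegral_sub {G : Type*} [MeasurableSpace G] [AddGroup G]
    [MeasurableAdd G] (μ : Measure G) [μ.IsAddRightInvariant] {E : Set G} (hE : MeasurableSet E)
    {h : G} (hEh : ∀ x ∈ E, x + h ∈ E) (f : G → ENNReal) :
    ∫⁻ x in E, f x ∂μ ≤ ∫⁻ x in E, f (x - h) ∂μ := by
  rw [← lintegral_indicator hE, ← lintegral_indicator hE]
  conv_rhs => rw [← lintegral_add_right_eq_self _ h]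
  refine lintegral_mono fun x => ?_
  by_cases hx : x ∈ E
  · simp [Set.indicator_of_mem hx, Set.indicator_of_mem (hEh x hx)]
  · simp [Set.indicator_of_notMem hx]

lemma measurableSet_wall (S : Finset (Fin d → ℤ)) : MeasurableSet (wall S) := by
  simp only [wall, Set.ofPred_forall]
  exact .iInter fun x => measurableSet_le measurable_const (measurable_pi_apply x)

/-- Given the values `χ ≥ 0` on `A`, the field on `Λ \ A` is a zero-boundary GFF shifted by the
nonnegative harmonic extension of `χ`. -/
lemma gff_wall_mul_lintegral_le (hd : 0 < d) {A Λ : Finset (Fin d → ℤ)} {χ : A → ℝ}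
    (hχ : 0 ≤ χ) :
    gff d (Λ \ A) (wall (Λ \ A)) *
        ∫⁻ φ, ENNReal.ofReal (Real.exp (-ham d Λ (extz (Λ \ A) φ + extz A χ))) ≤
      ∫⁻ φ in wall (Λ \ A), ENNReal.ofReal (Real.exp (-ham d Λ (extz (Λ \ A) φ + extz A χ))) := by
  obtain ⟨h, hsplit⟩ := exists_ham_split hd (sdiff_subset : Λ \ A ⊆ Λ) (extz A χ)
  have hh : 0 ≤ h := nonneg_of_ham_split hd (extz_nonneg hχ)
    (fun z hz => extz_apply_of_notMem χ (mem_sdiff.1 hz).2) hsplit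
  set k := ENNReal.ofReal (Real.exp (-ham d Λ (extz (Λ \ A) h + extz A χ)))
  have hdens : ∀ φ, ENNReal.ofReal (Real.exp (-ham d Λ (extz (Λ \ A) φ + extz A χ))) =
      k * ENNReal.ofReal (gffDensity d (Λ \ A) (φ - h)) := fun φ => by
    rw [hsplit, gffDensity, ← ENNReal.ofReal_mul (Real.exp_pos _).le, ← Real.exp_add]
    ring_nf
  have hZ := ENNReal.ofReal_pos.2 (gffZ_pos hd (Λ \ A))
  simp_rw [hdens, lintegral_const_mul' k _ ENNReal.ofReal_ne_top,
    lintegral_sub_right_eq_self (fun φ => ENNReal.ofReal (gffDensity d (Λ \ A) φ)) h,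
    lintegral_gffDensity hd, gff_apply]
  calc _ = k * ∫⁻ φ in wall (Λ \ A), ENNReal.ofReal (gffDensity d (Λ \ A) φ) := by
        rw [mul_comm, ← mul_assoc, mul_right_comm k, mul_assoc k,
          ENNReal.inv_mul_cancel hZ.ne' ENNReal.ofReal_ne_top, mul_one]
    _ ≤ _ := mul_le_mul_right (setLIntegral_le_setLIntegral_sub _ (measurableSet_wall _)
        (fun φ hφ x => add_nonneg (hφ x) (hh x)) _) k

def splitEquiv {A Λ : Finset (Fin d → ℤ)} (hA : A ⊆ Λ) :
    (Λ → ℝ) ≃ᵐ (A → ℝ) × (↥(Λ \ A) → ℝ) :=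
  (MeasurableEquiv.piEquivPiSubtypeProd (fun _ : Λ => ℝ) (fun x => (x : Fin d → ℤ) ∈ A)).trans
    ((MeasurableEquiv.piCongrLeft (fun _ => ℝ)
        { toFun := fun y => ⟨⟨y, hA y.2⟩, y.2⟩, invFun := fun x => ⟨x.1, x.2⟩
          left_inv := fun _ => rfl, right_inv := fun _ => rfl }).prodCongr
      (MeasurableEquiv.piCongrLeft (fun _ => ℝ)
        { toFun := fun z => ⟨⟨z, (mem_sdiff.1 z.2).1⟩, (mem_sdiff.1 z.2).2⟩
          invFun := fun x => ⟨x.1, mem_sdiff.2 ⟨x.1.2, x.2⟩⟩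
          left_inv := fun _ => rfl, right_inv := fun _ => rfl })).symm

section splitEquiv

variable {A Λ : Finset (Fin d → ℤ)} (hA : A ⊆ Λ) (ψ : Λ → ℝ)

lemma splitEquiv_apply_fst (y : A) : (splitEquiv hA ψ).1 y = ψ ⟨y, hA y.2⟩ := rfl

lemma splitEquiv_apply_snd (z : ↥(Λ \ A)) :
    (splitEquiv hA ψ).2 z = ψ ⟨z, (mem_sdiff.1 z.2).1⟩ := rfl

lemma measurePreserving_splitEquiv : MeasurePreserving (splitEquiv hA) := by
  rw [splitEquiv, MeasurableEquiv.coe_trans]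
  refine MeasurePreserving.comp (MeasurePreserving.symm _ ?_)
    (volume_preserving_piEquivPiSubtypeProd _ _)
  exact (volume_measurePreserving_piCongrLeft (fun _ => ℝ) _).prod
    (volume_measurePreserving_piCongrLeft (fun _ => ℝ) _)

lemma extz_eq_extz_splitEquiv :
    extz Λ ψ = extz (Λ \ A) (splitEquiv hA ψ).2 + extz A (splitEquiv hA ψ).1 := by
  funext z
  by_cases hzA : z ∈ A
  · have hzB : z ∉ Λ \ A := fun h => (mem_sdiff.1 h).2 hzA
    simp [extz_apply_of_mem _ (hA hzA), extz_apply_of_mem _ hzA, extz_apply_of_notMem _ hzB,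
      splitEquiv_apply_fst]
  by_cases hzΛ : z ∈ Λ
  · have hzB : z ∈ Λ \ A := mem_sdiff.2 ⟨hzΛ, hzA⟩
    simp [extz_apply_of_mem _ hzΛ, extz_apply_of_notMem _ hzA, extz_apply_of_mem _ hzB,
      splitEquiv_apply_snd]
  · have hzB : z ∉ Λ \ A := fun h => hzΛ (mem_sdiff.1 h).1
    simp [extz_apply_of_notMem _ hzΛ, extz_apply_of_notMem _ hzA, extz_apply_of_notMem _ hzB]

end splitEquiv

lemma setLIntegral_gffDensity_preimage_splitEquiv {A Λ : Finset (Fin d → ℤ)} (hA : A ⊆ Λ)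
    (P : Set ((A → ℝ) × (↥(Λ \ A) → ℝ))) :
    ∫⁻ ψ in splitEquiv hA ⁻¹' P, ENNReal.ofReal (gffDensity d Λ ψ) =
      ∫⁻ q in P, ENNReal.ofReal (Real.exp (-ham d Λ (extz (Λ \ A) q.2 + extz A q.1))) := by
  simp_rw [gffDensity, extz_eq_extz_splitEquiv hA]
  exact (measurePreserving_splitEquiv hA).setLIntegral_comp_preimage_emb
    (splitEquiv hA).measurableEmbedding
    (fun q => ENNReal.ofReal (Real.exp (-ham d Λ (extz (Λ \ A) q.2 + extz A q.1)))) P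

lemma gff_wall_mul_gff_le (hd : 0 < d) {A Λ : Finset (Fin d → ℤ)} (hA : A ⊆ Λ)
    {C : Set (A → ℝ)} (hC : MeasurableSet C) (hC0 : ∀ χ ∈ C, 0 ≤ χ) :
    gff d (Λ \ A) (wall (Λ \ A)) * gff d Λ (splitEquiv hA ⁻¹' (C ×ˢ Set.univ)) ≤
      gff d Λ (splitEquiv hA ⁻¹' (C ×ˢ wall (Λ \ A))) := by
  have hmeas : Measurable fun q : (A → ℝ) × (↥(Λ \ A) → ℝ) =>
      ENNReal.ofReal (Real.exp (-ham d Λ (extz (Λ \ A) q.2 + extz A q.1))) :=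
    (Real.continuous_exp.comp ((continuous_ham Λ).comp
      (((continuous_extz _).comp continuous_snd).add
        ((continuous_extz _).comp continuous_fst))).neg).measurable.ennreal_ofReal
  simp only [gff_apply Λ, setLIntegral_gffDensity_preimage_splitEquiv, Measure.volume_eq_prod,
    setLIntegral_prod _ hmeas.aemeasurable, Measure.restrict_univ]
  rw [mul_left_comm, ← lintegral_const_mul' _ _ (gff_ne_top hd _ _)]
  exact mul_le_mul_right
    (setLIntegral_mono' hC fun χ hχ => gff_wall_mul_lintegral_le hd (hC0 χ hχ)) _

/-- Conditionally on `φ ∈ [0,a]` on `A`, the GFF on `Λ_N` stays nonnegative off `A`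
with probability at least that of the hard-wall event for the zero-boundary GFF on
`Λ_N \ A`. -/
theorem gff_wall_conditional_lower_bound (d N : ℕ) (hd : 3 ≤ d)
    (A : Finset (Fin d → ℤ)) (hA : A ⊆ box d N) (a : ℝ) (ha : 0 < a) :
    gff d (box d N)
          ({ψ | ∀ x : box d N, (x : Fin d → ℤ) ∉ A → 0 ≤ ψ x} ∩
            {ψ | ∀ x : box d N, (x : Fin d → ℤ) ∈ A → ψ x ∈ Set.Icc 0 a}) /
        gff d (box d N) {ψ | ∀ x : box d N, (x : Fin d → ℤ) ∈ A → ψ x ∈ Set.Icc 0 a} ≥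
      gff d (box d N \ A) (wall (box d N \ A)) := by
  have hd0 : 0 < d := by omega
  set cube : Set (A → ℝ) := Set.univ.pi fun _ => Set.Icc 0 a
  set T : Set (box d N → ℝ) := {ψ | ∀ x : box d N, (x : Fin d → ℤ) ∈ A → ψ x ∈ Set.Icc 0 a}
  have hT : T = splitEquiv hA ⁻¹' (cube ×ˢ Set.univ) := by
    ext ψ
    exact ⟨fun h => ⟨fun y _ => h _ y.2, trivial⟩, fun h x hx => h.1 ⟨x, hx⟩ trivial⟩
  have hST : {ψ | ∀ x : box d N, (x : Fin d → ℤ) ∉ A → 0 ≤ ψ x} ∩ T =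
      splitEquiv hA ⁻¹' (cube ×ˢ wall (box d N \ A)) := by
    rw [hT]
    ext ψ
    exact ⟨fun h => ⟨h.2.1, fun z => h.1 _ (mem_sdiff.1 z.2).2⟩,
      fun h => ⟨fun x hx => h.2 ⟨x, mem_sdiff.2 ⟨x.2, hx⟩⟩, h.1, trivial⟩⟩
  have hT_ne_zero : gff d (box d N) T ≠ 0 := gff_ne_zero _ <| ne_of_gt <| calc
    0 < volume (Set.univ.pi fun _ : box d N => Set.Icc 0 a) := by
      rw [volume_pi_pi]
      exact CanonicallyOrderedAdd.prod_pos.2 fun _ _ => by simp [ha]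
    _ ≤ volume T := measure_mono fun ψ hψ x _ => hψ x trivial
  rw [ge_iff_le, ENNReal.le_div_iff_mul_le (.inl hT_ne_zero) (.inl (gff_ne_top hd0 _ _)), hST, hT]
  exact gff_wall_mul_gff_le hd0 hA (.univ_pi fun _ => measurableSet_Icc)
    fun χ hχ y => (hχ y trivial).1
end
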